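/- arXiv:2401.06636 — 9 statements merged into one kernel-verified Lean document; each statement's English description precedes it below -/
import Mathlib

section
/- Let S be the semigroup B^1_{[0,∞)} with an adjoined compact ideal I (with embedding homomorphism f), and assume that I is not open in S. Then for every open set U ⊆ S with I ⊆ U, the set f⁻¹(U) is unbounded in B_{[0,∞)}: for every real number a > 0 there exists (x,y) ∈ B_{[0,∞)} with f(x,y) ∈ U, x ≥ a and y ≥ a. -/
/-- The underlying set of the semigroup `B_{[0,∞)}`: pairs of non-negative reals. -/
abbrev Bsg := {p : ℝ × ℝ // 0 ≤ p.1 ∧ 0 ≤ p.2}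

namespace Bsg

/-- The multiplication `(a,b)·(c,d) = (a+c−min b c, b+d−min b c)`. -/
def bmul (u v : Bsg) : Bsg :=
  ⟨(u.1.1 + v.1.1 - min u.1.2 v.1.1, u.1.2 + v.1.2 - min u.1.2 v.1.1),
    by
      refine ⟨?_, ?_⟩
      · show (0:ℝ) ≤ u.1.1 + v.1.1 - min u.1.2 v.1.1
        have h := min_le_right u.1.2 v.1.1
        have h1 := u.2.1; have h2 := v.2.1; linarith
      · show (0:ℝ) ≤ u.1.2 + v.1.2 - min u.1.2 v.1.1
        have h := min_le_left u.1.2 v.1.1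
        have h1 := u.2.2; have h2 := v.2.2; linarith⟩

instance : Semigroup Bsg where
  mul := bmul
  mul_assoc := by
    rintro ⟨⟨a,b⟩,ha,hb⟩ ⟨⟨c,d⟩,hc,hd⟩ ⟨⟨e,g⟩,he,hg⟩
    show bmul (bmul _ _) _ = bmul _ (bmul _ _)
    apply Subtype.ext
    rw [Prod.ext_iff]
    constructor <;>
      simp only [bmul, min_def] <;> split_ifs <;> simp_all <;> linarith

/-- The natural partial order on the inverse semigroup `B_{[0,∞)}`:
`s ≼ t` iff `s = t·e` for some idempotent `e`. -/
def ple (s t : Bsg) : Prop := ∃ e : Bsg, e * e = e ∧ s = t * e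

/-- `L_α^+ = {(x, x+α) : x ≥ 0}`. -/
def Lplus (α : ℝ) : Set Bsg := {p | p.1.2 = p.1.1 + α}

/-- `L_α^− = {(x+α, x) : x ≥ 0}`. -/
def Lminus (α : ℝ) : Set Bsg := {p | p.1.1 = p.1.2 + α}

/-- `↓(a,b)`, the down-set of an element w.r.t. the natural partial order. -/
def lowerSet (t : Bsg) : Set Bsg := {s | ple s t}

/-- `↓°(a,b) = ↓(a,b) \ {(a,b)}`. -/
def lowerSetStrict (t : Bsg) : Set Bsg := lowerSet t \ {t}

/-- The inversion `(a,b) ↦ (b,a)`. -/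
def binv (u : Bsg) : Bsg := ⟨(u.1.2, u.1.1), u.2.2, u.2.1⟩

end Bsg

/- `B^1_{[0,∞)}`: the topology on `Bsg` is the subspace topology inherited from `ℝ × ℝ`,
which is the default instance on the subtype. -/

/-!
Since `I` is not open, some `q ∈ I` lies in the closure of `S \ I = f(B_{[0,∞)})`. Translating by
`f(a,0)` on the left and `f(0,a)` on the right is continuous and maps `q` into the ideal `I ⊆ U`,
so it maps some `f p` close to `q` into `U` as well; and `(a,0)·p·(0,a) = p + (a,a)`.
-/

theorem exists_mem_closure_compl_of_not_isOpen {X : Type*} [TopologicalSpace X] {s : Set X}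
    (hs : ¬ IsOpen s) : ∃ q ∈ s, q ∈ closure sᶜ := by
  by_contra! h
  refine hs (subset_interior_iff_isOpen.mp fun q hq => ?_)
  simpa [closure_compl] using h q hq

namespace Bsg

theorem coe_mul_mul_eq_add {a : ℝ} (ha : 0 ≤ a) (p : Bsg) :
    (((⟨(a, 0), ha, le_rfl⟩ : Bsg) * (p * ⟨(0, a), le_rfl, ha⟩) : Bsg) : ℝ × ℝ) =
      (a + p.1.1, p.1.2 + a) := by
  show ((bmul _ (bmul p _) : Bsg) : ℝ × ℝ) = _
  simp [bmul, min_eq_right p.2.2, min_eq_left p.2.1]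

end Bsg

theorem exists_map_mul_mul_mem_of_mem_closure_range {M S : Type*} [Semigroup M]
    [TopologicalSpace S] [Semigroup S]
    (hsep : ∀ a : S, Continuous (fun x : S => a * x) ∧ Continuous (fun x : S => x * a))
    {I : Set S} (hIdeal : ∀ s : S, ∀ a ∈ I, s * a ∈ I ∧ a * s ∈ I)
    {f : M → S} (hhom : ∀ u v : M, f (u * v) = f u * f v)
    {q : S} (hqI : q ∈ I) (hq : q ∈ closure (Set.range f))
    {U : Set S} (hU : IsOpen U) (hIU : I ⊆ U) (u v : M) :
    ∃ p : M, f (u * (p * v)) ∈ U := by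
  let g : S → S := fun x => f u * (x * f v)
  have hg : Continuous g := (hsep (f u)).1.comp (hsep (f v)).2
  have hgq : g q ∈ U := hIU (hIdeal _ _ (hIdeal _ q hqI).2).1
  obtain ⟨_, hpU, p, rfl⟩ := mem_closure_iff.mp hq _ (hU.preimage hg) hgq
  exact ⟨p, by rw [hhom, hhom]; exact hpU⟩

theorem stmt1_general {S : Type*} [TopologicalSpace S] [Semigroup S]
    (hsep : ∀ a : S, Continuous (fun x : S => a * x) ∧ Continuous (fun x : S => x * a))
    (I : Set S)
    (hIdeal : ∀ s : S, ∀ a ∈ I, s * a ∈ I ∧ a * s ∈ I)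
    (f : Bsg → S)
    (hhom : ∀ u v : Bsg, f (u * v) = f u * f v)
    (hrange : Set.range f = Iᶜ)
    (hInotopen : ¬ IsOpen I)
    (U : Set S) (hU : IsOpen U) (hIU : I ⊆ U) :
    ∀ a : ℝ, 0 < a → ∃ p : Bsg, f p ∈ U ∧ a ≤ p.1.1 ∧ a ≤ p.1.2 := by
  intro a ha
  obtain ⟨q, hqI, hq⟩ := exists_mem_closure_compl_of_not_isOpen hInotopen
  rw [← hrange] at hq
  obtain ⟨p, hp⟩ := exists_map_mul_mul_mem_of_mem_closure_range hsep hIdeal hhom hqI hq hU hIU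
    ⟨(a, 0), ha.le, le_rfl⟩ ⟨(0, a), le_rfl, ha.le⟩
  have hcoe := Bsg.coe_mul_mul_eq_add ha.le p
  refine ⟨_, hp, ?_, ?_⟩
  · rw [hcoe]; linarith [p.2.1]
  · rw [hcoe]; linarith [p.2.2]

/-- if `I` is not open then for every open `U ⊇ I` the set `f⁻¹(U)` is
unbounded in `B_{[0,∞)}`. -/
theorem stmt1 {S : Type*} [TopologicalSpace S] [T2Space S] [LocallyCompactSpace S] [Semigroup S]
    (hsep : ∀ a : S, Continuous (fun x : S => a * x) ∧ Continuous (fun x : S => x * a))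
    (I : Set S) (hne : I.Nonempty) (hIcomp : IsCompact I)
    (hIdeal : ∀ s : S, ∀ a ∈ I, s * a ∈ I ∧ a * s ∈ I)
    (f : Bsg → S) (hinj : Function.Injective f)
    (hhom : ∀ u v : Bsg, f (u * v) = f u * f v)
    (hrange : Set.range f = Iᶜ)
    (hemb : Topology.IsEmbedding f)
    (hInotopen : ¬ IsOpen I)
    (U : Set S) (hU : IsOpen U) (hIU : I ⊆ U) :
    ∀ a : ℝ, 0 < a → ∃ p : Bsg, f p ∈ U ∧ a ≤ p.1.1 ∧ a ≤ p.1.2 :=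
  stmt1_general hsep I hIdeal f hhom hrange hInotopen U hU hIU
end

section
/- Let S be the semigroup B^1_{[0,∞)} with an adjoined compact ideal I (with embedding homomorphism f), and assume that I is not open in S. Then for every open set U ⊆ S with I ⊆ U there exists a real number a ≥ 0 such that S \ U ⊆ f([0,a] × [0,a]). -/
/- `B^1_{[0,∞)}`: the topology on `Bsg` is the subspace topology inherited from `ℝ × ℝ`,
which is the default instance on the subtype. -/

open Set Topology

theorem IsPreconnected.subset_interior_of_disjoint_frontier {α : Type*} [TopologicalSpace α]
    {s t : Set α} (hs : IsPreconnected s) (hst : (s ∩ interior t).Nonempty)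
    (hfr : Disjoint s (frontier t)) : s ⊆ interior t :=
  hs.subset_of_closure_inter_subset isOpen_interior hst fun x ⟨hxt, hxs⟩ => by
    by_contra hx
    exact hfr.ne_of_mem hxs ⟨closure_mono interior_subset hxt, hx⟩ rfl

namespace Bsg

def square (a : ℝ) : Set Bsg := {p | p.1.1 ∈ Icc 0 a ∧ p.1.2 ∈ Icc 0 a}

theorem isCompact_square (a : ℝ) : IsCompact (square a) := by
  have hclosed : IsClosed {p : ℝ × ℝ | 0 ≤ p.1 ∧ 0 ≤ p.2} :=
    (isClosed_le continuous_const continuous_fst).inter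
      (isClosed_le continuous_const continuous_snd)
  exact hclosed.isClosedEmbedding_subtypeVal.isCompact_preimage
    (isCompact_Icc.prod isCompact_Icc)

theorem exists_subset_square {B : Set Bsg} (hB : IsCompact B) :
    ∃ a, 0 ≤ a ∧ B ⊆ square a := by
  obtain ⟨R, hR⟩ := (hB.image (f := fun p : Bsg => max p.1.1 p.1.2) (by fun_prop)).bddAbove
  refine ⟨max R 0, le_max_right R 0, fun p hp => ?_⟩
  have hpR : max p.1.1 p.1.2 ≤ R := hR (mem_image_of_mem _ hp)
  exact ⟨⟨p.2.1, by grind⟩, ⟨p.2.2, by grind⟩⟩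

theorem isPreconnected_compl_square {a : ℝ} (ha : 0 ≤ a) : IsPreconnected (square a)ᶜ := by
  have himage : Subtype.val '' (square a)ᶜ = Ioi a ×ˢ Ici 0 ∪ Ici 0 ×ˢ Ioi a := by
    ext ⟨x, y⟩
    simp only [square, mem_image, mem_compl_iff, mem_ofPred_eq, mem_Icc, Subtype.exists,
      mem_union, mem_prod, mem_Ioi, mem_Ici]
    constructor
    · rintro ⟨q, hq0, hq, rfl⟩
      grind
    · rintro (⟨hx, hy⟩ | ⟨hx, hy⟩)
      · exact ⟨(x, y), ⟨by linarith, hy⟩, by grind, rfl⟩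
      · exact ⟨(x, y), ⟨hx, by linarith⟩, by grind, rfl⟩
  have hunion : IsPreconnected (Ioi a ×ˢ Ici 0 ∪ Ici 0 ×ˢ Ioi a : Set (ℝ × ℝ)) :=
    ((convex_Ioi a).prod (convex_Ici 0)).isPreconnected.union (a + 1, a + 1)
      ⟨by simp, by simp; linarith⟩ ⟨by simp; linarith, by simp⟩
      ((convex_Ici 0).prod (convex_Ioi a)).isPreconnected
  rw [← himage] at hunion
  exact IsInducing.subtypeVal.isPreconnected_image.mp hunion

end Bsg

theorem stmt2_general {S : Type*} [TopologicalSpace S] [T2Space S] [LocallyCompactSpace S]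
    (I : Set S) (hIcomp : IsCompact I)
    (f : Bsg → S)
    (hrange : Set.range f = Iᶜ)
    (hemb : Topology.IsEmbedding f)
    (hInotopen : ¬ IsOpen I)
    (U : Set S) (hU : IsOpen U) (hIU : I ⊆ U) :
    ∃ a : ℝ, 0 ≤ a ∧
      Set.univ \ U ⊆ f '' {p : Bsg | p.1.1 ∈ Set.Icc 0 a ∧ p.1.2 ∈ Set.Icc 0 a} := by
  obtain ⟨K, hKcomp, hIK, hKU⟩ := exists_compact_between hIcomp hU hIU
  have hfrontier_range : frontier K ⊆ range f := by
    rw [hrange]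
    exact fun s hs hsI => hs.2 (hIK hsI)
  obtain ⟨a, ha, hfrontier_square⟩ := Bsg.exists_subset_square <|
    hemb.isInducing.isCompact_preimage' (hKcomp.of_isClosed_subset isClosed_frontier
      hKcomp.isClosed.frontier_subset) hfrontier_range
  obtain ⟨y, hyI, hy⟩ : ∃ y ∈ I, y ∉ interior I :=
    not_subset.mp fun h => hInotopen (subset_interior_iff_isOpen.mp h)
  obtain ⟨_, ⟨hpK, hpa⟩, p, rfl⟩ : (interior K \ f '' Bsg.square a ∩ range f).Nonempty := by
    refine mem_closure_iff.mp ?_ _ (isOpen_interior.sdiff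
      ((Bsg.isCompact_square a).image hemb.continuous).isClosed) ⟨hIK hyI, ?_⟩
    · rwa [hrange, closure_compl]
    · rintro ⟨q, -, hq⟩
      exact (hrange ▸ mem_range_self q : f q ∈ Iᶜ) (hq ▸ hyI)
  have hfar : f '' (Bsg.square a)ᶜ ⊆ interior K :=
    ((Bsg.isPreconnected_compl_square ha).image f hemb.continuous.continuousOn)
      |>.subset_interior_of_disjoint_frontier ⟨f p, ⟨p, fun h => hpa ⟨p, h, rfl⟩, rfl⟩, hpK⟩
      (disjoint_image_left.mpr (disjoint_compl_left_iff_subset.mpr hfrontier_square))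
  refine ⟨a, ha, fun s ⟨_, hsU⟩ => ?_⟩
  obtain ⟨q, rfl⟩ : s ∈ range f := hrange ▸ fun hsI => hsU (hIU hsI)
  exact ⟨q, not_not.mp fun hq => hsU (hKU (interior_subset (hfar ⟨q, hq, rfl⟩))), rfl⟩

/-- if `I` is not open then for every open `U ⊇ I` there is `a ≥ 0` with
`S \ U ⊆ f([0,a] × [0,a])`. -/
theorem stmt2 {S : Type*} [TopologicalSpace S] [T2Space S] [LocallyCompactSpace S] [Semigroup S]
    (hsep : ∀ a : S, Continuous (fun x : S => a * x) ∧ Continuous (fun x : S => x * a))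
    (I : Set S) (hne : I.Nonempty) (hIcomp : IsCompact I)
    (hIdeal : ∀ s : S, ∀ a ∈ I, s * a ∈ I ∧ a * s ∈ I)
    (f : Bsg → S) (hinj : Function.Injective f)
    (hhom : ∀ u v : Bsg, f (u * v) = f u * f v)
    (hrange : Set.range f = Iᶜ)
    (hemb : Topology.IsEmbedding f)
    (hInotopen : ¬ IsOpen I)
    (U : Set S) (hU : IsOpen U) (hIU : I ⊆ U) :
    ∃ a : ℝ, 0 ≤ a ∧
      Set.univ \ U ⊆ f '' {p : Bsg | p.1.1 ∈ Set.Icc 0 a ∧ p.1.2 ∈ Set.Icc 0 a} :=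
  stmt2_general I hIcomp f hrange hemb hInotopen U hU hIU
end

section
/- Let S be the semigroup B^1_{[0,∞)} with an adjoined compact ideal I. Then either I is an open subset of S, or S is compact. -/
/- `B^1_{[0,∞)}`: the topology on `Bsg` is the subspace topology inherited from `ℝ × ℝ`,
which is the default instance on the subtype. -/

/-! `B^1_{[0,∞)}` has one end: every compact set lies in a box `[0,M]²` whose complement in the
quadrant is connected. Take an open `U ⊇ I` with compact closure. Its frontier misses `I`, so it is
a compact subset of the range of `f`, and its preimage lies in such a box `B`. The connected set
`f(Bᶜ)` misses the frontier of `U`, so it lies either inside `U`, and then `S = f(B) ∪ closure U` is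
compact, or outside `closure U`, and then `I = U \ f(B)` is open. -/

open Set Topology

theorem isOpen_or_compactSpace_of_isEmbedding_compl {X Y : Type*} [TopologicalSpace X]
    [T2Space X] [WeaklyLocallyCompactSpace X] [TopologicalSpace Y]
    (hY : ∀ K : Set Y, IsCompact K → ∃ B, IsCompact B ∧ K ⊆ B ∧ IsPreconnected Bᶜ)
    {I : Set X} (hI : IsCompact I) {f : Y → X} (hf : IsEmbedding f) (hrange : range f = Iᶜ) :
    IsOpen I ∨ CompactSpace X := by
  obtain ⟨U, hU, hIU, hUc⟩ := exists_isOpen_superset_and_isCompact_closure hI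
  have hfrontier : closure U \ U ⊆ range f := fun x hx => hrange ▸ fun hxI => hx.2 (hIU hxI)
  have hpre : IsCompact (f ⁻¹' (closure U \ U)) := by
    rw [hf.isCompact_iff, image_preimage_eq_of_subset hfrontier]
    exact hUc.diff hU
  obtain ⟨B, hB, hpreB, hBc⟩ := hY _ hpre
  have hfB : IsCompact (f '' B) := hB.image hf.continuous
  have hsplit : f '' Bᶜ ⊆ U ∪ (closure U)ᶜ := by
    rintro _ ⟨y, hy, rfl⟩
    by_contra h
    simp only [mem_union, mem_compl_iff, not_or, not_not] at h
    exact hy (hpreB ⟨h.2, h.1⟩)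
  rcases (hBc.image f hf.continuous.continuousOn).subset_or_subset hU isClosed_closure.isOpen_compl
    (disjoint_compl_right.mono_left subset_closure) hsplit with hin | hout
  · refine Or.inr (isCompact_univ_iff.mp ((hfB.union hUc).of_isClosed_subset isClosed_univ ?_))
    intro x _
    by_cases hxI : x ∈ I
    · exact Or.inr (subset_closure (hIU hxI))
    obtain ⟨y, rfl⟩ : x ∈ range f := hrange ▸ hxI
    by_cases hy : y ∈ B
    · exact Or.inl (mem_image_of_mem f hy)
    · exact Or.inr (subset_closure (hin (mem_image_of_mem f hy)))
  · refine Or.inl ?_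
    suffices I = U ∩ (f '' B)ᶜ from this ▸ hU.inter hfB.isClosed.isOpen_compl
    ext x
    refine ⟨fun hx => ⟨hIU hx, fun hxB => ?_⟩, fun ⟨hxU, hxB⟩ => ?_⟩
    · exact (hrange ▸ image_subset_range f B hxB : x ∈ Iᶜ) hx
    by_contra hxI
    obtain ⟨y, rfl⟩ : x ∈ range f := hrange ▸ hxI
    have hy : y ∉ B := fun hy => hxB (mem_image_of_mem f hy)
    exact hout (mem_image_of_mem f hy) (subset_closure hxU)

namespace Bsg

theorem isClosedEmbedding_val :
    IsClosedEmbedding (Subtype.val : Bsg → ℝ × ℝ) :=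
  ((isClosed_le continuous_const continuous_fst).inter
    (isClosed_le continuous_const continuous_snd)).isClosedEmbedding_subtypeVal

theorem isCompact_setOf_val_le (M : ℝ) : IsCompact {z : Bsg | z.1 ≤ (M, M)} := by
  convert isClosedEmbedding_val.isCompact_preimage (isCompact_Icc (a := (0, 0)) (b := (M, M)))
    using 1
  ext z
  exact (and_iff_right z.2).symm

theorem isPreconnected_setOf_not_val_le {M : ℝ} (hM : 0 ≤ M) :
    IsPreconnected {z : Bsg | ¬ z.1 ≤ (M, M)} := by
  rw [← isClosedEmbedding_val.isInducing.isPreconnected_image]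
  have himage : Subtype.val '' {z : Bsg | ¬ z.1 ≤ (M, M)} =
      Ioi M ×ˢ Ici 0 ∪ Ici 0 ×ˢ Ioi M := by
    ext ⟨x, y⟩
    simp only [mem_image, mem_ofPred_eq, Subtype.exists, exists_and_right, exists_eq_right,
      Prod.mk_le_mk, not_and_or, not_le, mem_union, mem_prod, mem_Ioi, mem_Ici]
    constructor
    · rintro ⟨⟨hx, hy⟩, h | h⟩
      exacts [Or.inl ⟨h, hy⟩, Or.inr ⟨hx, h⟩]
    · rintro (⟨hx, hy⟩ | ⟨hx, hy⟩)
      exacts [⟨⟨by linarith, hy⟩, Or.inl hx⟩, ⟨⟨hx, by linarith⟩, Or.inr hy⟩]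
  have hcorner : ((M + 1, M + 1) : ℝ × ℝ) ∈ Ioi M ×ˢ Ici 0 ∩ Ici 0 ×ˢ Ioi M := by
    simp only [mem_inter_iff, mem_prod, mem_Ioi, mem_Ici]
    refine ⟨⟨?_, ?_⟩, ?_, ?_⟩ <;> linarith
  rw [himage]
  exact ((convex_Ioi M).prod (convex_Ici 0)).isPreconnected.union _ hcorner.1 hcorner.2
    ((convex_Ici 0).prod (convex_Ioi M)).isPreconnected

theorem exists_isCompact_superset_isPreconnected_compl (K : Set Bsg) (hK : IsCompact K) :
    ∃ B, IsCompact B ∧ K ⊆ B ∧ IsPreconnected Bᶜ := by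
  obtain ⟨a, ha⟩ := hK.bddAbove_image (continuous_fst.comp continuous_subtype_val).continuousOn
  obtain ⟨b, hb⟩ := hK.bddAbove_image (continuous_snd.comp continuous_subtype_val).continuousOn
  set M := max (max a b) 0
  refine ⟨{z | z.1 ≤ (M, M)}, isCompact_setOf_val_le M, fun z hz => ⟨?_, ?_⟩,
    isPreconnected_setOf_not_val_le (le_max_right _ _)⟩
  · exact (ha (mem_image_of_mem _ hz)).trans ((le_max_left a b).trans (le_max_left _ _))
  · exact (hb (mem_image_of_mem _ hz)).trans ((le_max_right a b).trans (le_max_left _ _))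

end Bsg

theorem stmt3_general {S : Type*} [TopologicalSpace S] [T2Space S] [LocallyCompactSpace S]
    (I : Set S) (hIcomp : IsCompact I) (f : Bsg → S) (hrange : Set.range f = Iᶜ)
    (hemb : Topology.IsEmbedding f) :
    IsOpen I ∨ CompactSpace S :=
  isOpen_or_compactSpace_of_isEmbedding_compl Bsg.exists_isCompact_superset_isPreconnected_compl
    hIcomp hemb hrange

/-- either `I` is open in `S` or `S` is compact. -/
theorem stmt3 {S : Type*} [TopologicalSpace S] [T2Space S] [LocallyCompactSpace S] [Semigroup S]
    (hsep : ∀ a : S, Continuous (fun x : S => a * x) ∧ Continuous (fun x : S => x * a))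
    (I : Set S) (hne : I.Nonempty) (hIcomp : IsCompact I)
    (hIdeal : ∀ s : S, ∀ a ∈ I, s * a ∈ I ∧ a * s ∈ I)
    (f : Bsg → S) (hinj : Function.Injective f)
    (hhom : ∀ u v : Bsg, f (u * v) = f u * f v)
    (hrange : Set.range f = Iᶜ)
    (hemb : Topology.IsEmbedding f) :
    IsOpen I ∨ CompactSpace S :=
  stmt3_general I hIcomp f hrange hemb
end

section
/- The one-point compactification OnePoint(B^1_{[0,∞)}), with the multiplication extending that of B_{[0,∞)} and with ∞ as a zero element, is a compact Hausdorff space in which the multiplication is separately continuous (for every element u the maps v ↦ u·v and v ↦ v·u are continuous) and the inversion map sending (a,b) ↦ (b,a) and ∞ ↦ ∞ is continuous. -/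
/- `B^1_{[0,∞)}`: the topology on `Bsg` is the subspace topology inherited from `ℝ × ℝ`,
which is the default instance on the subtype. -/

open Bsg in
/-- The multiplication of `B_{[0,∞)}` extended to the one-point compactification,
with `∞` as a zero element. -/
def omul (u v : OnePoint Bsg) : OnePoint Bsg :=
  Option.elim u OnePoint.infty
    (fun a => Option.elim v OnePoint.infty (fun b => (Option.some (a * b) : OnePoint Bsg)))

open Bsg in
/-- The inversion `(a,b) ↦ (b,a)`, `∞ ↦ ∞` on the one-point compactification. -/
def oinv (u : OnePoint Bsg) : OnePoint Bsg :=
  Option.elim u OnePoint.infty (fun a => (Option.some (binv a) : OnePoint Bsg))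


/- A closed subset of the plane is a proper metric space, so `OnePoint Bsg` is compact Hausdorff.
A continuous self-map of `Bsg` extends continuously to `OnePoint Bsg` by `∞ ↦ ∞` as soon as it is
proper. Translations are proper because they move every point by a bounded distance:
`(a,b)·(c,d) - (c,d) = (a - m, b - m)` with `0 ≤ m = min b c ≤ b`, and symmetrically on the right.
The inversion is an involutive homeomorphism. -/

open Filter Metric

theorem tendsto_cocompact_of_dist_le {X : Type*} [PseudoMetricSpace X] [ProperSpace X]
    {f : X → X} (C : ℝ) (h : ∀ x, dist (f x) x ≤ C) :
    Tendsto f (cocompact X) (cocompact X) := by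
  rw [hasBasis_cocompact.tendsto_iff hasBasis_cocompact]
  exact fun K hK => ⟨cthickening C K, hK.cthickening, fun x hx hfx =>
    hx (mem_cthickening_of_dist_le x (f x) C K hfx (dist_comm x (f x) ▸ h x))⟩

theorem OnePoint.continuous_map_of_dist_le {X : Type*} [MetricSpace X] [ProperSpace X]
    {f : X → X} (hf : Continuous f) (C : ℝ) (h : ∀ x, dist (f x) x ≤ C) :
    Continuous (OnePoint.map f) :=
  OnePoint.continuous_map hf <| by
    simpa only [coclosedCompact_eq_cocompact] using tendsto_cocompact_of_dist_le C h

namespace Bsg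

@[simp]
lemma val_mul (u v : Bsg) :
    (u * v).1 = (u.1.1 + v.1.1 - min u.1.2 v.1.1, u.1.2 + v.1.2 - min u.1.2 v.1.1) :=
  rfl

instance : ProperSpace Bsg :=
  ProperSpace.of_isClosed (s := {p : ℝ × ℝ | 0 ≤ p.1 ∧ 0 ≤ p.2})
    ((isClosed_le continuous_const continuous_fst).inter
      (isClosed_le continuous_const continuous_snd))

instance : ContinuousMul Bsg where
  continuous_mul := by
    refine Continuous.subtype_mk (f := fun p : Bsg × Bsg => (p.1 * p.2).1) ?_ _
    simp only [val_mul]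
    fun_prop

lemma dist_mul_left_le (u v : Bsg) : dist (u * v) v ≤ u.1.1 + u.1.2 := by
  obtain ⟨⟨a, b⟩, ha, hb⟩ := u
  obtain ⟨⟨c, d⟩, hc, hd⟩ := v
  simp only [Subtype.dist_eq, val_mul, Prod.dist_eq, Real.dist_eq]
  have := min_le_left b c
  have := le_min hb hc
  refine max_le (abs_le.2 ⟨?_, ?_⟩) (abs_le.2 ⟨?_, ?_⟩) <;> linarith

lemma dist_mul_right_le (u v : Bsg) : dist (v * u) v ≤ u.1.1 + u.1.2 := by
  obtain ⟨⟨a, b⟩, ha, hb⟩ := u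
  obtain ⟨⟨c, d⟩, hc, hd⟩ := v
  simp only [Subtype.dist_eq, val_mul, Prod.dist_eq, Real.dist_eq]
  have := min_le_right d a
  have := le_min hd ha
  refine max_le (abs_le.2 ⟨?_, ?_⟩) (abs_le.2 ⟨?_, ?_⟩) <;> linarith

def binvHomeomorph : Bsg ≃ₜ Bsg where
  toFun := binv
  invFun := binv
  left_inv _ := rfl
  right_inv _ := rfl
  continuous_toFun := by
    refine Continuous.subtype_mk ?_ _
    fun_prop
  continuous_invFun := by
    refine Continuous.subtype_mk ?_ _
    fun_prop

end Bsg

open Bsg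

lemma omul_coe_left (a : Bsg) : omul (a : OnePoint Bsg) = OnePoint.map (a * ·) := by
  funext v; cases v <;> rfl

lemma omul_coe_right (a : Bsg) : (fun v => omul v (a : OnePoint Bsg)) = OnePoint.map (· * a) := by
  funext v; cases v <;> rfl

lemma omul_infty_right : (fun v => omul v OnePoint.infty) = fun _ => OnePoint.infty := by
  funext v; cases v <;> rfl

lemma oinv_eq_onePointCongr : oinv = binvHomeomorph.onePointCongr := by
  funext v; cases v <;> rfl

/-- the one-point compactification of `B^1_{[0,∞)}`, with the extended
multiplication (with `∞` as zero), is compact Hausdorff, has separately continuous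
multiplication, and continuous inversion. -/
theorem stmt4 :
    (∀ u v : Bsg, omul (Option.some u : OnePoint Bsg) (Option.some v : OnePoint Bsg)
        = (Option.some (u * v) : OnePoint Bsg)) ∧
    (∀ u : OnePoint Bsg,
        omul u OnePoint.infty = OnePoint.infty ∧ omul OnePoint.infty u = OnePoint.infty) ∧
    CompactSpace (OnePoint Bsg) ∧ T2Space (OnePoint Bsg) ∧
    (∀ u : OnePoint Bsg,
        Continuous (fun v => omul u v) ∧ Continuous (fun v => omul v u)) ∧
    Continuous oinv := by
  refine ⟨fun _ _ => rfl, fun u => ⟨congrFun omul_infty_right u, rfl⟩, inferInstance,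
    inferInstance, fun u => ?_, oinv_eq_onePointCongr ▸ binvHomeomorph.onePointCongr.continuous⟩
  cases u with
  | infty => exact ⟨continuous_const, omul_infty_right ▸ continuous_const⟩
  | coe a =>
    exact ⟨omul_coe_left a ▸ OnePoint.continuous_map_of_dist_le (continuous_const_mul a) _
        (dist_mul_left_le a),
      omul_coe_right a ▸ OnePoint.continuous_map_of_dist_le (continuous_mul_const a) _
        (dist_mul_right_le a)⟩
end

section
/- Let S be a Hausdorff locally compact semitopological semigroup, let z ∈ S satisfy z·s = s·z = z for all s ∈ S, and let f : B_{[0,∞)} → S be an injective semigroup homomorphism with range S \ {z} which is a topological embedding of B^1_{[0,∞)} onto the subspace S \ {z}. Then either {z} is open in S, or the map F : OnePoint(B^1_{[0,∞)}) → S defined by F(∞) = z and F(x) = f(x) for x ∈ B_{[0,∞)} is a homeomorphism. -/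
/- `B^1_{[0,∞)}`: the topology on `Bsg` is the subspace topology inherited from `ℝ × ℝ`,
which is the default instance on the subtype. -/

open Set Topology

def PreconnectedAtInfinity (X : Type*) [TopologicalSpace X] : Prop :=
  ∀ C : Set X, IsCompact C → ∃ L, IsCompact L ∧ C ⊆ L ∧ IsPreconnected Lᶜ

theorem compactSpace_of_isEmbedding_of_range_eq_compl_singleton {X S : Type*}
    [TopologicalSpace X] [TopologicalSpace S] [T2Space S] [LocallyCompactSpace S]
    (hX : PreconnectedAtInfinity X) {z : S} (hz : ¬IsOpen ({z} : Set S)) {f : X → S}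
    (hf : IsEmbedding f) (hrange : range f = {z}ᶜ) : CompactSpace S := by
  obtain ⟨K, hK, hKz⟩ := exists_compact_mem_nhds z
  have hzK : z ∈ interior K := mem_interior_iff_mem_nhds.mpr hKz
  have hboundary : IsCompact (f ⁻¹' (K \ interior K)) := by
    have hsub : K \ interior K ⊆ range f := by
      rw [hrange]
      rintro s hs rfl
      exact hs.2 hzK
    rw [hf.isCompact_iff, image_preimage_eq_of_subset hsub]
    exact hK.diff isOpen_interior
  obtain ⟨L, hL, hboundaryL, hLc⟩ := hX _ hboundary
  have hfar : ∃ p ∉ L, f p ∈ interior K := by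
    have hnhds : interior K ∩ (f '' L)ᶜ ∈ 𝓝 z :=
      (isOpen_interior.inter (hL.image hf.continuous).isClosed.isOpen_compl).mem_nhds
        ⟨hzK, fun ⟨p, _, hp⟩ => (hrange ▸ mem_range_self p : f p ∈ ({z}ᶜ : Set S)) hp⟩
    have : (𝓝[≠] z).NeBot := ⟨fun h => hz ((isOpen_singleton_iff_punctured_nhds z).mpr h)⟩
    obtain ⟨s, hsz, hsK, hsL⟩ := Filter.nonempty_of_mem (inter_mem_nhdsWithin {z}ᶜ hnhds)
    obtain ⟨p, rfl⟩ : s ∈ range f := hrange ▸ hsz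
    exact ⟨p, fun hp => hsL (mem_image_of_mem f hp), hsK⟩
  have hLcK : Lᶜ ⊆ f ⁻¹' interior K := by
    obtain ⟨p, hpL, hpK⟩ := hfar
    refine hLc.subset_left_of_subset_union (isOpen_interior.preimage hf.continuous)
      (hK.isClosed.isOpen_compl.preimage hf.continuous)
      (disjoint_compl_right.mono_left (preimage_mono interior_subset)) ?_ ⟨p, hpL, hpK⟩
    intro q hqL
    by_cases hq : f q ∈ K
    · exact Or.inl (by_contra fun hqi => hqL (hboundaryL ⟨hq, hqi⟩))
    · exact Or.inr hq
  have hcover : univ = K ∪ f '' L := by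
    refine (eq_univ_of_forall fun s => ?_).symm
    by_cases hs : s = z
    · exact Or.inl (hs ▸ interior_subset hzK)
    obtain ⟨p, rfl⟩ : s ∈ range f := hrange ▸ hs
    by_cases hp : p ∈ L
    · exact Or.inr (mem_image_of_mem f hp)
    · exact Or.inl (interior_subset (hLcK hp))
  exact ⟨hcover ▸ hK.union (hL.image hf.continuous)⟩

namespace Bsg

def coordSum (p : Bsg) : ℝ := p.1.1 + p.1.2

theorem continuous_coordSum : Continuous coordSum := by
  unfold coordSum
  fun_prop

theorem image_val_preimage_coordSum (t : Set ℝ) :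
    Subtype.val '' (coordSum ⁻¹' t) = Ici 0 ∩ (fun q : ℝ × ℝ => q.1 + q.2) ⁻¹' t := by
  ext q
  constructor
  · rintro ⟨p, hp, rfl⟩
    exact ⟨p.2, hp⟩
  · rintro ⟨hq, hqt⟩
    exact ⟨⟨q, hq⟩, hqt, rfl⟩

theorem isCompact_preimage_coordSum_Iic (M : ℝ) : IsCompact (coordSum ⁻¹' Iic M) := by
  rw [IsEmbedding.subtypeVal.isCompact_iff, image_val_preimage_coordSum]
  refine (isCompact_Icc (a := 0) (b := (M, M))).of_isClosed_subset
    (isClosed_Ici.inter (isClosed_Iic.preimage (by fun_prop))) fun q hq => ?_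
  obtain ⟨hq₁, hq₂⟩ : 0 ≤ q.1 ∧ 0 ≤ q.2 := hq.1
  have hM : q.1 + q.2 ≤ M := hq.2
  exact ⟨hq.1, show q.1 ≤ M ∧ q.2 ≤ M by constructor <;> linarith⟩

theorem isPreconnected_preimage_coordSum_Ioi (M : ℝ) : IsPreconnected (coordSum ⁻¹' Ioi M) := by
  rw [← IsEmbedding.subtypeVal.isInducing.isPreconnected_image, image_val_preimage_coordSum]
  exact ((convex_Ici 0).inter
    (convex_halfSpace_gt (LinearMap.fst ℝ ℝ ℝ + LinearMap.snd ℝ ℝ ℝ).isLinear M)).isPreconnected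

theorem preconnectedAtInfinity : PreconnectedAtInfinity Bsg := by
  intro C hC
  obtain ⟨M, hM⟩ := (hC.image continuous_coordSum).bddAbove
  refine ⟨coordSum ⁻¹' Iic M, isCompact_preimage_coordSum_Iic M,
    fun p hp => hM (mem_image_of_mem _ hp), ?_⟩
  rw [← preimage_compl, compl_Iic]
  exact isPreconnected_preimage_coordSum_Ioi M

end Bsg

theorem stmt5_general {S : Type*} [TopologicalSpace S] [T2Space S] [LocallyCompactSpace S]
    (z : S)
    (f : Bsg → S)
    (hrange : Set.range f = ({z}ᶜ : Set S))
    (hemb : Topology.IsEmbedding f) :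
    IsOpen ({z} : Set S) ∨
      IsHomeomorph (fun u : OnePoint Bsg => Option.elim u z f) := by
  refine or_iff_not_imp_left.mpr fun hz => ?_
  have : CompactSpace S := compactSpace_of_isEmbedding_of_range_eq_compl_singleton
    Bsg.preconnectedAtInfinity hz hemb hrange
  exact (OnePoint.equivOfIsEmbeddingOfRangeEq z f hemb hrange).isHomeomorph

/-- if `S` is a Hausdorff locally compact semitopological semigroup which is
`B^1_{[0,∞)}` with an adjoined zero `z`, then either `{z}` is open or `S` is the one-point
compactification of `B^1_{[0,∞)}` (via the canonical map). -/
theorem stmt5 {S : Type*} [TopologicalSpace S] [T2Space S] [LocallyCompactSpace S] [Semigroup S]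
    (hsep : ∀ a : S, Continuous (fun x : S => a * x) ∧ Continuous (fun x : S => x * a))
    (z : S) (hz : ∀ s : S, z * s = z ∧ s * z = z)
    (f : Bsg → S) (hinj : Function.Injective f)
    (hhom : ∀ u v : Bsg, f (u * v) = f u * f v)
    (hrange : Set.range f = ({z}ᶜ : Set S))
    (hemb : Topology.IsEmbedding f) :
    IsOpen ({z} : Set S) ∨
      IsHomeomorph (fun u : OnePoint Bsg => Option.elim u z f) :=
  stmt5_general z f hrange hemb
end

section
/- Let S be the semigroup B^1_{[0,∞)} with an adjoined compact ideal I, and assume in addition that the multiplication of S is jointly continuous (S is a topological semigroup). Then I is an open subset of S. -/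
/- `B^1_{[0,∞)}`: the topology on `Bsg` is the subspace topology inherited from `ℝ × ℝ`,
which is the default instance on the subtype. -/

open Filter Topology Set

lemma comap_nhds_le_cocompact {X Y : Type*} [TopologicalSpace X] [TopologicalSpace Y]
    [T2Space Y] {f : X → Y} (hf : Continuous f) {a : Y} (ha : a ∉ range f) :
    comap f (𝓝 a) ≤ cocompact X :=
  hasBasis_cocompact.ge_iff.2 fun K hK =>
    ⟨(f '' K)ᶜ, (hK.image hf).isClosed.compl_mem_nhds fun h => ha (image_subset_range f K h),
      fun _ hx hxK => hx (mem_image_of_mem f hxK)⟩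

lemma tendsto_cocompact_of_tendsto_comp_atTop {ι X : Type*} [TopologicalSpace X]
    {g : X → ℝ} (hg : Continuous g) {l : Filter ι} {u : ι → X}
    (h : Tendsto (g ∘ u) l atTop) : Tendsto u l (cocompact X) := by
  refine hasBasis_cocompact.tendsto_right_iff.2 fun K hK => ?_
  obtain ⟨R, hR⟩ := (hK.image hg).bddAbove
  exact (h.eventually_gt_atTop R).mono fun i hi hiK => hi.not_ge (hR ⟨u i, hiK, rfl⟩)

-- `hX` says that `X` has at most one end.
theorem tendsto_cocompact_nhdsSet_compl_range {X S : Type*} [TopologicalSpace X]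
    [TopologicalSpace S] [T2Space S] [LocallyCompactSpace S]
    (hX : ∀ K : Set X, IsCompact K → ∃ B ∈ cocompact X, IsPreconnected B ∧ Disjoint B K)
    {f : X → S} (hf : IsEmbedding f) (hcomp : IsCompact (range f)ᶜ)
    (hnc : ¬ IsClosed (range f)) :
    Tendsto f (cocompact X) (𝓝ˢ (range f)ᶜ) := by
  obtain ⟨a, hacl, har⟩ : ∃ a ∈ closure (range f), a ∉ range f :=
    not_subset.1 (mt isClosed_of_closure_subset hnc)
  have : (comap f (𝓝 a)).NeBot :=
    comap_neBot_iff_frequently.2 (mem_closure_iff_frequently.1 hacl)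
  intro V hV
  obtain ⟨K, hK, hcompK, hKV⟩ := exists_compact_between hcomp isOpen_interior
    (subset_interior_iff_mem_nhdsSet.2 hV)
  have hC : IsCompact (f ⁻¹' (K \ interior K)) :=
    (hf.isInducing.isCompact_preimage_iff fun x hx => not_not.1 fun h => hx.2 (hcompK h)).2
      (hK.diff isOpen_interior)
  obtain ⟨B, hB, hBpre, hBC⟩ := hX _ hC
  have hmeet : (f '' B ∩ interior K).Nonempty := by
    obtain ⟨x, hxB, hxK⟩ := nonempty_of_mem (f := comap f (𝓝 a)) <| inter_mem
      (comap_nhds_le_cocompact hf.continuous har hB)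
      (preimage_mem_comap (isOpen_interior.mem_nhds (hcompK har)))
    exact ⟨f x, mem_image_of_mem f hxB, hxK⟩
  have hcover : f '' B ⊆ interior K ∪ Kᶜ := by
    rintro _ ⟨x, hxB, rfl⟩
    by_cases hx : f x ∈ K
    · exact .inl (by_contra fun h => hBC.ne_of_mem hxB ⟨hx, h⟩ rfl)
    · exact .inr hx
  have hBK : f '' B ⊆ interior K :=
    (hBpre.image f hf.continuous.continuousOn).subset_left_of_subset_union isOpen_interior
      hK.isClosed.isOpen_compl (disjoint_compl_right.mono_left interior_subset) hcover hmeet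
  exact mem_map.2 <| mem_of_superset hB fun x hx =>
    interior_subset (s := V) (hKV (interior_subset (hBK (mem_image_of_mem f hx))))

lemma IsCompact.exists_tendsto_of_tendsto_nhdsSet {ι X : Type*} [TopologicalSpace X]
    {s : Set X} (hs : IsCompact s) {𝒰 : Ultrafilter ι} {u : ι → X}
    (h : Tendsto u 𝒰 (𝓝ˢ s)) : ∃ x ∈ s, Tendsto u 𝒰 (𝓝 x) := by
  by_contra! hne
  have : Disjoint (𝓝ˢ s) (𝒰.map u) := hs.disjoint_nhdsSet_left.2 fun x hx => by
    by_contra hx'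
    exact hne x hx (Ultrafilter.clusterPt_iff.1 (clusterPt_iff_not_disjoint.2 hx'))
  exact (𝒰.map u).neBot.ne (disjoint_self.1 (this.mono_left h))

theorem mem_of_tendsto_nhdsSet_of_mul_eq {ι S : Type*} [TopologicalSpace S] [T1Space S]
    [Mul S] [ContinuousMul S] {I J : Set S} (hI : IsCompact I) (hIJ : ∀ a ∈ I, ∀ s, a * s ∈ I)
    (hJ : IsCompact J) {l : Filter ι} [l.NeBot] {u v : ι → S} {s : S}
    (hu : Tendsto u l (𝓝ˢ I)) (hv : Tendsto v l (𝓝ˢ J)) (huv : ∀ i, u i * v i = s) :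
    s ∈ I := by
  obtain ⟨b, hbI, hb⟩ := hI.exists_tendsto_of_tendsto_nhdsSet (hu.mono_left (Ultrafilter.of_le l))
  obtain ⟨c, -, hc⟩ := hJ.exists_tendsto_of_tendsto_nhdsSet (hv.mono_left (Ultrafilter.of_le l))
  have hlim : Tendsto (fun _ => s) (Ultrafilter.of l : Filter ι) (𝓝 (b * c)) := by
    simpa only [huv] using hb.mul hc
  exact tendsto_const_nhds_iff.1 hlim ▸ hIJ b hbI c

namespace Bsg

lemma mk_zero_mul_mk_zero {x : ℝ} (hx : 0 ≤ x) :
    (⟨(0, x), le_rfl, hx⟩ : Bsg) * ⟨(x, 0), hx, le_rfl⟩ = ⟨(0, 0), le_rfl, le_rfl⟩ := by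
  show bmul _ _ = _
  ext <;> simp [bmul]

lemma isCompact_setOf_add_le (R : ℝ) : IsCompact {u : Bsg | u.1.1 + u.1.2 ≤ R} := by
  have hbox : IsCompact (Subtype.val ⁻¹' Icc (0, 0) (R, R) : Set Bsg) :=
    (IsClosedEmbedding.subtypeVal (p := fun p : ℝ × ℝ => 0 ≤ p.1 ∧ 0 ≤ p.2)
      ((isClosed_le continuous_const continuous_fst).inter
        (isClosed_le continuous_const continuous_snd))).isCompact_preimage isCompact_Icc
  refine hbox.of_isClosed_subset (isClosed_le (by fun_prop) continuous_const)
    fun u (hu : u.1.1 + u.1.2 ≤ R) => ?_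
  obtain ⟨hx, hy⟩ := u.2
  exact ⟨⟨hx, hy⟩, by linarith, by linarith⟩

lemma isPreconnected_setOf_lt_add (R : ℝ) : IsPreconnected {u : Bsg | R < u.1.1 + u.1.2} := by
  refine IsEmbedding.subtypeVal.isInducing.isPreconnected_image.1 ?_
  have himage : Subtype.val '' {u : Bsg | R < u.1.1 + u.1.2} =
      {p : ℝ × ℝ | R < p.1 + p.2} ∩ Ici 0 := by
    ext p
    simp [Prod.le_def, and_comm]
  rw [himage]
  exact ((convex_halfSpace_gt (LinearMap.fst ℝ ℝ ℝ + LinearMap.snd ℝ ℝ ℝ).isLinear R).inter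
    (convex_Ici (0 : ℝ × ℝ))).isPreconnected

lemma exists_mem_cocompact_isPreconnected_disjoint (K : Set Bsg) (hK : IsCompact K) :
    ∃ B ∈ cocompact Bsg, IsPreconnected B ∧ Disjoint B K := by
  obtain ⟨R, hR⟩ := (hK.image (by fun_prop : Continuous fun u : Bsg => u.1.1 + u.1.2)).bddAbove
  refine ⟨{u | R < u.1.1 + u.1.2}, ?_, isPreconnected_setOf_lt_add R, ?_⟩
  · exact mem_of_superset (isCompact_setOf_add_le R).compl_mem_cocompact
      fun u (hu : ¬_ ≤ R) => not_le.1 hu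
  · exact disjoint_left.2 fun u hu huK => (hR ⟨u, huK, rfl⟩).not_gt hu

lemma tendsto_cocompact_of_tendsto_add {ι : Type*} {l : Filter ι} {u : ι → Bsg}
    (h : Tendsto (fun i => (u i).1.1 + (u i).1.2) l atTop) : Tendsto u l (cocompact Bsg) :=
  tendsto_cocompact_of_tendsto_comp_atTop (g := fun u : Bsg => u.1.1 + u.1.2) (by fun_prop) h

end Bsg

theorem stmt6_general {S : Type*} [TopologicalSpace S] [T2Space S] [LocallyCompactSpace S] [Semigroup S]
    (I : Set S) (hIcomp : IsCompact I)
    (hIdeal : ∀ s : S, ∀ a ∈ I, s * a ∈ I ∧ a * s ∈ I)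
    (f : Bsg → S)
    (hhom : ∀ u v : Bsg, f (u * v) = f u * f v)
    (hrange : Set.range f = Iᶜ)
    (hemb : Topology.IsEmbedding f)
    (hjoint : Continuous (fun p : S × S => p.1 * p.2)) :
    IsOpen I := by
  have : ContinuousMul S := ⟨hjoint⟩
  by_contra hI
  have hf : Tendsto f (cocompact Bsg) (𝓝ˢ I) := by
    simpa only [hrange, compl_compl] using
      tendsto_cocompact_nhdsSet_compl_range Bsg.exists_mem_cocompact_isPreconnected_disjoint hemb
        (by rwa [hrange, compl_compl]) (by rwa [hrange, isClosed_compl_iff])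
  have hv : Tendsto (fun n : ℕ => (⟨(0, n), le_rfl, n.cast_nonneg⟩ : Bsg)) atTop (cocompact Bsg) :=
    Bsg.tendsto_cocompact_of_tendsto_add (by simpa using tendsto_natCast_atTop_atTop (R := ℝ))
  have hw : Tendsto (fun n : ℕ => (⟨(n, 0), n.cast_nonneg, le_rfl⟩ : Bsg)) atTop (cocompact Bsg) :=
    Bsg.tendsto_cocompact_of_tendsto_add (by simpa using tendsto_natCast_atTop_atTop (R := ℝ))
  have hzero : f ⟨(0, 0), le_rfl, le_rfl⟩ ∈ I :=
    mem_of_tendsto_nhdsSet_of_mul_eq hIcomp (fun a ha s => (hIdeal s a ha).2) hIcomp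
      (hf.comp hv) (hf.comp hw) fun n => by
        simp only [Function.comp_apply, ← hhom, Bsg.mk_zero_mul_mk_zero n.cast_nonneg]
  exact (hrange ▸ mem_range_self _ : _ ∈ Iᶜ) hzero

/-- if in addition the multiplication of `S` is jointly continuous, then `I`
is open. -/
theorem stmt6 {S : Type*} [TopologicalSpace S] [T2Space S] [LocallyCompactSpace S] [Semigroup S]
    (hsep : ∀ a : S, Continuous (fun x : S => a * x) ∧ Continuous (fun x : S => x * a))
    (I : Set S) (hne : I.Nonempty) (hIcomp : IsCompact I)
    (hIdeal : ∀ s : S, ∀ a ∈ I, s * a ∈ I ∧ a * s ∈ I)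
    (f : Bsg → S) (hinj : Function.Injective f)
    (hhom : ∀ u v : Bsg, f (u * v) = f u * f v)
    (hrange : Set.range f = Iᶜ)
    (hemb : Topology.IsEmbedding f)
    (hjoint : Continuous (fun p : S × S => p.1 * p.2)) :
    IsOpen I :=
  stmt6_general I hIcomp hIdeal f hhom hrange hemb hjoint
end

section
/- Let S be the semigroup B^2_{[0,∞)} with an adjoined compact ideal I (with embedding homomorphism f), and assume that I is not open in S. Then for every open set U ⊆ S with I ⊆ U whose closure is compact, there exist finite sets A, C ⊆ [0,∞) such that S \ U ⊆ f(⋃_{α∈A} L_α^+ ∪ ⋃_{α∈C} L_α^−). -/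
/-- The topology `τ_L`, induced by the injection `(a,b) ↦ (b−a, min(a,b))` into `ℝ_d × ℝ`,
where the first factor carries the discrete topology. -/
def tauL : TopologicalSpace Bsg :=
  TopologicalSpace.induced (fun p : Bsg => ((p.1.2 - p.1.1, min p.1.1 p.1.2) : ℝ × ℝ))
    (@instTopologicalSpaceProd ℝ ℝ ⊥ inferInstance)

/- `B^2_{[0,∞)}`: we equip `Bsg` with the topology `τ_L`. -/
instance (priority := 2000) : TopologicalSpace Bsg := tauL

/-!
The line index `shift (a, b) = b - a` is locally constant for `τ_L`, so the compact set
`f⁻¹(∂U)` meets only finitely many lines, say those with index in `Λ`, and `min a b` is bounded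
on it. A line is connected, so if it meets both `f⁻¹ U` and its complement it meets `f⁻¹(∂U)`.
If no line had a tail inside `f⁻¹ U`, then `f⁻¹ U` would lie in finitely many compact segments
and `I = U \ f(segments)` would be open. So some tail lies in `U`; it accumulates in the compact
set `closure U`, and since `min a b → ∞` along it, only at points `z ∈ I`. Right multiplication by
elements of `B_{[0,∞)}` shifts this tail onto any other line while `z · s ∈ I ⊆ U`, so every line
meets `U`. Hence every point outside `U` lies on a line with index in `Λ`.
-/

open Set Filter Topology

theorem IsPreconnected.inter_frontier_nonempty {X : Type*} [TopologicalSpace X] {s U : Set X}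
    (hs : IsPreconnected s) (hsU : (s ∩ U).Nonempty) (hsU' : (s \ U).Nonempty) :
    (s ∩ frontier U).Nonempty := by
  by_contra hfr
  have hcover : s ⊆ interior U ∪ (closure U)ᶜ := fun x hx => by
    by_contra h
    simp only [mem_union, mem_compl_iff, not_or, not_not] at h
    exact hfr ⟨x, hx, h.2, h.1⟩
  rcases hs.subset_or_subset isOpen_interior isClosed_closure.isOpen_compl
      (disjoint_compl_right.mono_left interior_subset_closure) hcover with h | h
  · obtain ⟨x, hxs, hxU⟩ := hsU'
    exact hxU (interior_subset (h hxs))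
  · obtain ⟨x, hxs, hxU⟩ := hsU
    exact h hxs (subset_closure hxU)

theorem isOpen_of_preimage_subset_isCompact {X S : Type*} [TopologicalSpace X]
    [TopologicalSpace S] [T2Space S] {f : X → S} (hf : Continuous f) {I U : Set S}
    (hrange : range f = Iᶜ) (hU : IsOpen U) (hIU : I ⊆ U) {K : Set X} (hK : IsCompact K)
    (hUK : f ⁻¹' U ⊆ K) : IsOpen I := by
  have hI : I = U \ f '' K := by
    ext w
    constructor
    · intro hw
      refine ⟨hIU hw, ?_⟩
      rintro ⟨x, -, rfl⟩
      exact (hrange ▸ mem_range_self x : f x ∈ Iᶜ) hw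
    · rintro ⟨hwU, hwK⟩
      by_contra hwI
      obtain ⟨x, rfl⟩ : w ∈ range f := hrange ▸ hwI
      exact hwK ⟨x, hUK hwU, rfl⟩
  rw [hI]
  exact hU.sdiff (hK.image hf).isClosed

namespace Bsg

def shift (p : Bsg) : ℝ := p.1.2 - p.1.1

def base (p : Bsg) : ℝ := min p.1.1 p.1.2

/-- The point `(x, x + r)` or `(x - r, x)` of the line `shift = r`, with `x` clamped to
`[0, ∞)`. -/
def linePt (r x : ℝ) : Bsg :=
  ⟨(max x 0 + max (-r) 0, max x 0 + max r 0),
    add_nonneg (le_max_right _ _) (le_max_right _ _),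
    add_nonneg (le_max_right _ _) (le_max_right _ _)⟩

lemma shift_linePt (r x : ℝ) : shift (linePt r x) = r := by
  simp only [shift, linePt]
  linarith [max_zero_sub_max_neg_zero_eq_self r]

lemma base_linePt (r x : ℝ) : base (linePt r x) = max x 0 := by
  simp only [base, linePt]
  rcases le_total r 0 with h | h
  · simp [max_eq_right h]
  · simp [max_eq_right (neg_nonpos_of_nonneg h)]

lemma base_nonneg (p : Bsg) : 0 ≤ base p := le_min p.2.1 p.2.2

lemma linePt_shift_base (p : Bsg) : linePt (shift p) (base p) = p := by
  obtain ⟨⟨a, b⟩, ha, hb⟩ := p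
  ext <;> simp only [linePt, shift, base] <;> rcases le_total a b with h | h <;> simp [h, ha, hb]

lemma shift_mul (u v : Bsg) : shift (u * v) = shift u + shift v := by
  change shift (bmul u v) = _
  simp only [shift, bmul]
  ring

lemma tauL_eq : tauL = .induced shift ⊥ ⊓ .induced base inferInstance := by
  change TopologicalSpace.induced _ (.induced Prod.fst ⊥ ⊓ .induced Prod.snd _) = _
  rw [induced_inf, induced_compose, induced_compose]
  rfl

lemma isOpen_shift_preimage (s : Set ℝ) : IsOpen (shift ⁻¹' s) :=
  TopologicalSpace.le_def.1 (tauL_eq.le.trans inf_le_left) _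
    (⟨s, trivial, rfl⟩ : IsOpen[.induced shift ⊥] (shift ⁻¹' s))

lemma continuous_base : Continuous base :=
  continuous_le_dom (tauL_eq.le.trans inf_le_right) continuous_induced_dom

lemma continuous_linePt (r : ℝ) : Continuous (linePt r) := by
  have h : Continuous[_, .induced shift ⊥ ⊓ .induced base inferInstance] (linePt r) := by
    refine continuous_inf_rng.2 ⟨continuous_induced_rng.2 ?_, continuous_induced_rng.2 ?_⟩
    · rw [show shift ∘ linePt r = fun _ => r from funext (shift_linePt r)]
      exact @continuous_const _ _ _ ⊥ r
    · rw [show base ∘ linePt r = fun x => max x 0 from funext (base_linePt r)]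
      exact continuous_id.max continuous_const
  rwa [← tauL_eq] at h

lemma finite_shift_image {K : Set Bsg} (hK : IsCompact K) : (shift '' K).Finite := by
  obtain ⟨t, ht⟩ := hK.elim_finite_subcover (fun r : ℝ => shift ⁻¹' {r})
    (fun r => isOpen_shift_preimage {r}) (fun p _ => mem_iUnion.2 ⟨shift p, rfl⟩)
  refine t.finite_toSet.subset ?_
  rintro _ ⟨p, hp, rfl⟩
  obtain ⟨r, hr, hpr⟩ := mem_iUnion₂.1 (ht hp)
  rwa [← mem_singleton_iff.1 hpr] at hr

lemma not_mapClusterPt_linePt (r : ℝ) (p : Bsg) : ¬ MapClusterPt p atTop (linePt r) := by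
  intro h
  have htend : Tendsto (base ∘ linePt r) atTop atTop := by
    rw [show base ∘ linePt r = fun x => max x 0 from funext (base_linePt r)]
    exact tendsto_atTop_mono (fun x => le_max_left x 0) tendsto_id
  exact ((h.continuousAt_comp continuous_base.continuousAt).clusterPt.mono htend).ne
    (disjoint_nhds_atTop _).eq_bot

section AdjoinedIdeal

variable {S : Type*} [TopologicalSpace S] {f : Bsg → S} {U : Set S}

lemma exists_mem_frontier_on_ray (hf : Continuous f) {r N x y : ℝ} (hx : N ≤ x) (hy : N ≤ y)
    (hxU : f (linePt r x) ∈ U) (hyU : f (linePt r y) ∉ U) :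
    ∃ q ∈ f ⁻¹' frontier U, shift q = r ∧ N ≤ base q := by
  have hray : IsPreconnected ((f ∘ linePt r) '' Ici N) :=
    isPreconnected_Ici.image _ (hf.comp (continuous_linePt r)).continuousOn
  obtain ⟨_, ⟨z, hz, rfl⟩, hzU⟩ :=
    hray.inter_frontier_nonempty ⟨_, mem_image_of_mem _ hx, hxU⟩ ⟨_, mem_image_of_mem _ hy, hyU⟩
  exact ⟨linePt r z, hzU, shift_linePt r z, (base_linePt r z).symm ▸ le_max_of_le_left hz⟩

lemma exists_forall_ge_linePt_mem [T2Space S] (hf : Continuous f) {I : Set S}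
    (hrange : range f = Iᶜ) (hI : ¬ IsOpen I) (hU : IsOpen U) (hIU : I ⊆ U)
    (hF : IsCompact (f ⁻¹' frontier U)) :
    ∃ r M : ℝ, ∀ x ≥ M, f (linePt r x) ∈ U := by
  by_contra! hnot
  obtain ⟨M, hM⟩ := (hF.image continuous_base).bddAbove
  refine hI (isOpen_of_preimage_subset_isCompact hf hrange hU hIU
    ((finite_shift_image hF).isCompact_biUnion fun r _ =>
      (isCompact_Icc (a := 0) (b := M)).image (continuous_linePt r)) fun p hp => ?_)
  obtain ⟨y, hy, hyU⟩ := hnot (shift p) (base p)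
  obtain ⟨q, hq, hqp, hpq⟩ := exists_mem_frontier_on_ray hf le_rfl hy
    ((linePt_shift_base p).symm ▸ hp) hyU
  exact mem_biUnion ⟨q, hq, hqp⟩
    ⟨base p, ⟨base_nonneg p, hpq.trans (hM (mem_image_of_mem _ hq))⟩, linePt_shift_base p⟩

lemma exists_mapClusterPt_notMem_range (hf : IsInducing f) (hUc : IsCompact (closure U))
    {r M : ℝ} (htail : ∀ x ≥ M, f (linePt r x) ∈ U) :
    ∃ z ∉ range f, MapClusterPt z atTop (f ∘ linePt r) := by
  obtain ⟨z, -, hz⟩ := hUc.exists_mapClusterPt_of_frequently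
    ((eventually_ge_atTop M).mono fun x hx => subset_closure (htail x hx)).frequently
  refine ⟨z, ?_, hz⟩
  rintro ⟨p, rfl⟩
  exact not_mapClusterPt_linePt r p (hf.mapClusterPt_iff.1 hz)

lemma exists_shift_eq_mem [Semigroup S] (hmul : ∀ a : S, Continuous (· * a))
    (hhom : ∀ u v : Bsg, f (u * v) = f u * f v) (hU : IsOpen U) {z : S} (hz : ∀ a, z * a ∈ U)
    {r₀ : ℝ} (hcl : MapClusterPt z atTop (f ∘ linePt r₀)) (r : ℝ) :
    ∃ p, shift p = r ∧ f p ∈ U := by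
  let q := linePt (r - r₀) 0
  obtain ⟨x, hx⟩ := ((hcl.continuousAt_comp (hmul (f q)).continuousAt).frequently
    (hU.mem_nhds (hz (f q)))).exists
  refine ⟨linePt r₀ x * q, ?_, ?_⟩
  · rw [shift_mul, shift_linePt, shift_linePt]
    ring
  · rwa [hhom]

lemma shift_mem_image_frontier_of_notMem (hf : Continuous f)
    (hline : ∀ r, ∃ p, shift p = r ∧ f p ∈ U) {p : Bsg} (hp : f p ∉ U) :
    shift p ∈ shift '' (f ⁻¹' frontier U) := by
  obtain ⟨p', hp'p, hp'⟩ := hline (shift p)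
  rw [← linePt_shift_base p', hp'p] at hp'
  rw [← linePt_shift_base p] at hp
  obtain ⟨q, hq, hqp, -⟩ := exists_mem_frontier_on_ray hf (base_nonneg p') (base_nonneg p) hp' hp
  exact ⟨q, hq, hqp⟩

end AdjoinedIdeal

end Bsg

open Bsg in
theorem stmt7_general {S : Type*} [TopologicalSpace S] [T2Space S] [Semigroup S]
    (hsep : ∀ a : S, Continuous (fun x : S => a * x) ∧ Continuous (fun x : S => x * a))
    (I : Set S)
    (hIdeal : ∀ s : S, ∀ a ∈ I, s * a ∈ I ∧ a * s ∈ I)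
    (f : Bsg → S)
    (hhom : ∀ u v : Bsg, f (u * v) = f u * f v)
    (hrange : Set.range f = Iᶜ)
    (hemb : Topology.IsEmbedding f)
    (hInotopen : ¬ IsOpen I)
    (U : Set S) (hU : IsOpen U) (hIU : I ⊆ U) (hUc : IsCompact (closure U)) :
    ∃ A C : Set ℝ, A.Finite ∧ C.Finite ∧ (∀ α ∈ A, (0:ℝ) ≤ α) ∧ (∀ α ∈ C, (0:ℝ) ≤ α) ∧
      Set.univ \ U ⊆ f '' ((⋃ α ∈ A, Lplus α) ∪ ⋃ α ∈ C, Lminus α) := by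
  have hfr : frontier U ⊆ range f := fun x hx =>
    hrange ▸ fun hxI => (hU.frontier_eq ▸ hx).2 (hIU hxI)
  have hF : IsCompact (f ⁻¹' frontier U) := hemb.isInducing.isCompact_preimage'
    (hUc.of_isClosed_subset isClosed_frontier frontier_subset_closure) hfr
  obtain ⟨r₀, M, htail⟩ := exists_forall_ge_linePt_mem hemb.continuous hrange hInotopen hU hIU hF
  obtain ⟨z, hz, hcl⟩ := exists_mapClusterPt_notMem_range hemb.isInducing hUc htail
  have hzI : z ∈ I := by simpa [hrange] using hz
  have hline := exists_shift_eq_mem (fun a => (hsep a).2) hhom hU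
    (fun a => hIU (hIdeal a z hzI).2) hcl
  have hΛ := finite_shift_image hF
  refine ⟨shift '' (f ⁻¹' frontier U) ∩ Ici 0, Neg.neg '' (shift '' (f ⁻¹' frontier U)) ∩ Ici 0,
    hΛ.inter_of_left _, (hΛ.image _).inter_of_left _, fun _ h => h.2, fun _ h => h.2, ?_⟩
  rintro s ⟨-, hsU⟩
  obtain ⟨p, rfl⟩ : s ∈ range f := hrange ▸ fun hsI => hsU (hIU hsI)
  have hp := shift_mem_image_frontier_of_notMem hemb.continuous hline hsU
  refine ⟨p, ?_, rfl⟩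
  rcases le_or_gt 0 (shift p) with h | h
  · exact Or.inl (mem_biUnion ⟨hp, h⟩ (by simp [Lplus, shift]))
  · exact Or.inr (mem_biUnion ⟨⟨_, hp, rfl⟩, neg_nonneg.2 h.le⟩ (by simp [Lminus, shift]))

open Bsg in
/-- if `I` is not open, then for every open `U ⊇ I` with compact closure there
are finite sets `A, C ⊆ [0,∞)` with `S \ U ⊆ f(⋃_{α∈A} L_α^+ ∪ ⋃_{α∈C} L_α^−)`. -/
theorem stmt7 {S : Type*} [TopologicalSpace S] [T2Space S] [LocallyCompactSpace S] [Semigroup S]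
    (hsep : ∀ a : S, Continuous (fun x : S => a * x) ∧ Continuous (fun x : S => x * a))
    (I : Set S) (hne : I.Nonempty) (hIcomp : IsCompact I)
    (hIdeal : ∀ s : S, ∀ a ∈ I, s * a ∈ I ∧ a * s ∈ I)
    (f : Bsg → S) (hinj : Function.Injective f)
    (hhom : ∀ u v : Bsg, f (u * v) = f u * f v)
    (hrange : Set.range f = Iᶜ)
    (hemb : Topology.IsEmbedding f)
    (hInotopen : ¬ IsOpen I)
    (U : Set S) (hU : IsOpen U) (hIU : I ⊆ U) (hUc : IsCompact (closure U)) :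
    ∃ A C : Set ℝ, A.Finite ∧ C.Finite ∧ (∀ α ∈ A, (0:ℝ) ≤ α) ∧ (∀ α ∈ C, (0:ℝ) ≤ α) ∧
      Set.univ \ U ⊆ f '' ((⋃ α ∈ A, Lplus α) ∪ ⋃ α ∈ C, Lminus α) :=
  stmt7_general hsep I hIdeal f hhom hrange hemb hInotopen U hU hIU hUc
end

section
/- Let S be the semigroup B^2_{[0,∞)} with an adjoined compact ideal I. Then either I is an open subset of S, or S is compact. -/
/-! If `I` is not open, some point of `I` is a limit of points of `f(B)`; since
`z ↦ (n,0)·z·(0,n)` shifts `B` up the diagonal by `n` and maps `I` into `I`, there are points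
of `f(B)` of arbitrarily large height close to `I`.

Fix a compact neighbourhood `K` of `I`. Its frontier misses `I`, so its preimage in `B` is
compact, i.e. lies in finitely many rays below some height. Every upward half-ray avoiding this
box is connected and misses the frontier of `K`, so it lies entirely inside or entirely outside
`K`. Hence some half-ray lies in `K`; its cluster points lie in `I`, and a two-sided translation
carrying that ray onto the diagonal `L_0^+` maps `I` into `I`, so the diagonal enters `K`
arbitrarily high and therefore eventually stays in `K`. Left translations carry this to every
ray, so everything outside the box is mapped into `K`, and `S = K ∪ f(box)` is compact. -/

open Set Filter Topology

theorem IsPreconnected.subset_of_disjoint_frontier {X : Type*} [TopologicalSpace X]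
    {s t : Set X} (hs : IsPreconnected s) (hst : Disjoint s (frontier t))
    (hne : (s ∩ t).Nonempty) : s ⊆ t := by
  have hint : ∀ x ∈ s, x ∈ closure t → x ∈ interior t := fun x hxs hxt =>
    by_contra fun h => hst.notMem_of_mem_left hxs ⟨hxt, h⟩
  obtain ⟨x, hxs, hxt⟩ := hne
  refine (hs.subset_of_closure_inter_subset isOpen_interior
    ⟨x, hxs, hint x hxs (subset_closure hxt)⟩ ?_).trans interior_subset
  rintro y ⟨hy, hys⟩
  exact hint y hys (closure_mono interior_subset hy)

theorem Topology.IsInducing.notMem_range_of_mapClusterPt {X Y α : Type*} [TopologicalSpace X]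
    [TopologicalSpace Y] [LocallyCompactSpace Y] {f : X → Y} (hf : IsInducing f)
    (hr : IsOpen (range f)) {l : Filter α} {φ : α → X} (hφ : Tendsto φ l (cocompact X))
    {y : Y} (hy : MapClusterPt y l (f ∘ φ)) : y ∉ range f := by
  intro hyr
  obtain ⟨P, hP, hyP, hPr⟩ := exists_compact_subset hr hyr
  have hfar : ∀ᶠ a in l, φ a ∉ f ⁻¹' P :=
    hφ (hf.isCompact_preimage' hP hPr).compl_mem_cocompact
  obtain ⟨a, haP, haP'⟩ := ((hy.frequently (mem_interior_iff_mem_nhds.1 hyP)).and_eventually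
    hfar).exists
  exact haP' haP

noncomputable section

namespace Bsg

def index (z : Bsg) : ℝ := z.1.2 - z.1.1

def height (z : Bsg) : ℝ := min z.1.1 z.1.2

-- `ray δ` parametrizes `L_δ^+` (if `δ ≥ 0`) or `L_{-δ}^-` (if `δ ≤ 0`) by `height`,
-- clipped at `0` so that it is defined and continuous on all of `ℝ`.
def ray (δ u : ℝ) : Bsg :=
  ⟨(max u 0 + max (-δ) 0, max u 0 + max δ 0), by positivity, by positivity⟩

def box (F : Finset ℝ) (M : ℝ) : Set Bsg := {z | index z ∈ F ∧ height z ≤ M}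

lemma mul_def (z w : Bsg) : z * w = bmul z w := rfl

lemma height_nonneg (z : Bsg) : 0 ≤ height z := le_min z.2.1 z.2.2

@[simp]
lemma index_ray (δ u : ℝ) : index (ray δ u) = δ := by
  simp only [index, ray]
  rcases le_total 0 δ with h | h <;> simp [h]

@[simp]
lemma height_ray (δ u : ℝ) : height (ray δ u) = max u 0 := by
  simp only [height, ray]
  rcases le_total 0 δ with h | h <;> simp [h]

lemma ray_index_height (z : Bsg) : ray (index z) (height z) = z := by
  obtain ⟨⟨a, b⟩, ha, hb⟩ := z
  ext <;> simp only [ray, index, height] <;> rcases le_total a b with h | h <;> simp [h, ha, hb]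

lemma ray_zero_mul_ray_zero (δ u : ℝ) (hu : 0 ≤ u) :
    ray δ 0 * ray 0 (u + max δ 0) = ray δ u := by
  rcases le_total 0 δ with h | h
  · ext <;> simp [mul_def, bmul, ray, h, hu, max_eq_left (add_nonneg hu h)]
  · ext <;> simp [mul_def, bmul, ray, h, hu, add_comm]

lemma ray_mul_ray_mul_ray (δ u : ℝ) (hu : 0 ≤ u) :
    ray (max (-δ) 0) 0 * ray δ u * ray (-max δ 0) 0 = ray 0 u := by
  rcases le_total 0 δ with h | h <;> ext <;> simp [mul_def, bmul, ray, h, hu]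

lemma height_ray_mul_mul_ray {n : ℝ} (hn : 0 ≤ n) (z : Bsg) :
    height (ray (-n) 0 * z * ray n 0) = height z + n := by
  obtain ⟨⟨a, b⟩, ha, hb⟩ := z
  simp [mul_def, bmul, height, ray, hn, ha, hb, add_comm n a, min_add_add_right]

lemma isOpen_setOf_index_eq (δ : ℝ) : IsOpen {z : Bsg | index z = δ} :=
  @isOpen_induced Bsg (ℝ × ℝ) (@instTopologicalSpaceProd ℝ ℝ ⊥ _) _ _
    (@Continuous.isOpen_preimage _ _ (@instTopologicalSpaceProd ℝ ℝ ⊥ _) ⊥ _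
      (@continuous_fst ℝ ℝ ⊥ _) {δ} (@isOpen_discrete ℝ ⊥ (discreteTopology_bot ℝ) _))

lemma continuous_height : Continuous height :=
  @Continuous.comp Bsg (ℝ × ℝ) ℝ _ (@instTopologicalSpaceProd ℝ ℝ ⊥ _) _ _ Prod.snd
    (@continuous_snd ℝ ℝ ⊥ _) continuous_induced_dom

lemma continuous_ray (δ : ℝ) : Continuous (ray δ) := by
  refine continuous_induced_rng.2 ?_
  have : (fun z : Bsg => (z.1.2 - z.1.1, min z.1.1 z.1.2)) ∘ ray δ = fun u => (δ, max u 0) :=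
    funext fun u => Prod.ext (index_ray δ u) (height_ray δ u)
  rw [this]
  exact @Continuous.prodMk ℝ ℝ ℝ ⊥ _ _ _ _ (@continuous_const ℝ ℝ _ ⊥ δ)
    (continuous_id.max continuous_const)

lemma exists_subset_box_of_isCompact {C : Set Bsg} (hC : IsCompact C) :
    ∃ F M, C ⊆ box F M := by
  obtain ⟨F, hF⟩ := hC.elim_finite_subcover (fun δ => {z : Bsg | index z = δ})
    isOpen_setOf_index_eq fun z _ => mem_iUnion.2 ⟨index z, rfl⟩
  obtain ⟨M, hM⟩ := (hC.image continuous_height).bddAbove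
  refine ⟨F, M, fun z hz => ⟨?_, hM (mem_image_of_mem height hz)⟩⟩
  obtain ⟨δ, hδ, rfl⟩ := mem_iUnion₂.1 (hF hz)
  exact hδ

lemma box_eq_biUnion (F : Finset ℝ) (M : ℝ) : box F M = ⋃ δ ∈ F, ray δ '' Icc 0 M := by
  ext z
  simp only [box, mem_ofPred_eq, mem_iUnion, mem_image, mem_Icc, exists_prop]
  constructor
  · rintro ⟨hF, hM⟩
    exact ⟨index z, hF, height z, ⟨height_nonneg z, hM⟩, ray_index_height z⟩
  · rintro ⟨δ, hδ, u, ⟨hu, huM⟩, rfl⟩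
    simpa [hu] using ⟨hδ, huM⟩

lemma isCompact_box (F : Finset ℝ) (M : ℝ) : IsCompact (box F M) := by
  rw [box_eq_biUnion]
  exact F.isCompact_biUnion fun δ _ => isCompact_Icc.image (continuous_ray δ)

lemma tendsto_ray_atTop_cocompact (δ : ℝ) : Tendsto (ray δ) atTop (cocompact Bsg) := by
  refine hasBasis_cocompact.tendsto_right_iff.2 fun C hC => ?_
  obtain ⟨F, M, hCFM⟩ := exists_subset_box_of_isCompact hC
  filter_upwards [eventually_gt_atTop M] with u hu huC
  have := (hCFM huC).2
  rw [height_ray] at this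
  linarith [le_max_left u 0]

lemma ray_notMem_box {F : Finset ℝ} {M : ℝ} {z : Bsg} (hz : z ∉ box F M) {u : ℝ}
    (hu : height z ≤ u) : ray (index z) u ∉ box F M := by
  rintro ⟨hF, hM⟩
  rw [index_ray] at hF
  rw [height_ray] at hM
  exact hz ⟨hF, hu.trans ((le_max_left u 0).trans hM)⟩

lemma ray_mem_iff_of_preimage_frontier_subset {Y : Type*} [TopologicalSpace Y] {f : Bsg → Y}
    (hf : Continuous f) {K : Set Y} {F : Finset ℝ} {M : ℝ}
    (hK : f ⁻¹' frontier K ⊆ box F M) {z : Bsg} (hz : z ∉ box F M) {u : ℝ}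
    (hu : height z ≤ u) :
    f (ray (index z) u) ∈ K ↔ f z ∈ K := by
  set s := (f ∘ ray (index z)) '' Ici (height z)
  have hs : IsPreconnected s :=
    isPreconnected_Ici.image _ (hf.comp (continuous_ray _)).continuousOn
  have hsK : Disjoint s (frontier K) := by
    rw [disjoint_left]
    rintro _ ⟨v, hv, rfl⟩ hv'
    exact ray_notMem_box hz hv (hK hv')
  have hzs : f z ∈ s := ⟨height z, mem_Ici.2 le_rfl, by simp [ray_index_height]⟩
  have hus : f (ray (index z) u) ∈ s := ⟨u, hu, rfl⟩
  exact ⟨fun h => hs.subset_of_disjoint_frontier hsK ⟨_, hus, h⟩ hzs,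
    fun h => hs.subset_of_disjoint_frontier hsK ⟨_, hzs, h⟩ hus⟩

end Bsg

end

open Bsg

section

variable {S : Type*} [TopologicalSpace S] {I : Set S} {f : Bsg → S}

lemma exists_preimage_frontier_subset_box [T2Space S] (hf : IsInducing f)
    (hrange : range f = Iᶜ) {K : Set S} (hK : IsCompact K) (hIK : I ⊆ interior K) :
    ∃ F M, f ⁻¹' frontier K ⊆ box F M := by
  refine exists_subset_box_of_isCompact (hf.isCompact_preimage' ?_ ?_)
  · exact hK.of_isClosed_subset isClosed_frontier hK.isClosed.frontier_subset
  · rw [hrange]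
    exact fun w hw hwI => hw.2 (hIK hwI)

lemma exists_lt_height_mem [Semigroup S] [SeparatelyContinuousMul S]
    (hIdeal : ∀ s : S, ∀ a ∈ I, s * a ∈ I ∧ a * s ∈ I)
    (hhom : ∀ u v : Bsg, f (u * v) = f u * f v) (hrange : range f = Iᶜ) (hI : ¬IsOpen I)
    (M : ℝ) {U : Set S} (hU : IsOpen U) (hIU : I ⊆ U) : ∃ z, M < height z ∧ f z ∈ U := by
  obtain ⟨a, haI, ha⟩ : ∃ a ∈ I, a ∉ interior I :=
    not_subset.1 fun h => hI (interior_eq_iff_isOpen.1 (interior_subset.antisymm h))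
  set n := max M 0 + 1
  set Φ : S → S := fun w => f (ray (-n) 0) * w * f (ray n 0)
  have hΦ : Continuous Φ := (continuous_mul_const _).comp (continuous_const_mul _)
  have hΦa : Φ a ∈ U := hIU (hIdeal _ _ (hIdeal _ a haI).1).2
  obtain ⟨_, hxU, x, rfl⟩ : (Φ ⁻¹' U ∩ range f).Nonempty := by
    rw [hrange]
    exact mem_closure_iff.1 (by rwa [closure_compl]) _ (hU.preimage hΦ) hΦa
  refine ⟨ray (-n) 0 * x * ray n 0, ?_, by simpa [Φ, hhom] using hxU⟩
  rw [height_ray_mul_mul_ray (by positivity) x]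
  linarith [height_nonneg x, le_max_left M 0]

lemma frequently_ray_zero_mem_of_eventually_ray_mem [Semigroup S] [LocallyCompactSpace S]
    [SeparatelyContinuousMul S]
    (hIdeal : ∀ s : S, ∀ a ∈ I, s * a ∈ I ∧ a * s ∈ I)
    (hhom : ∀ u v : Bsg, f (u * v) = f u * f v) (hf : IsInducing f) (hrange : range f = Iᶜ)
    (hIc : IsClosed I) {δ : ℝ} {K : Set S} (hK : IsCompact K)
    (hδ : ∀ᶠ u in atTop, f (ray δ u) ∈ K) {V : Set S} (hV : IsOpen V) (hIV : I ⊆ V) :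
    ∃ᶠ u in atTop, f (ray 0 u) ∈ V := by
  obtain ⟨b, -, hb⟩ := hK (f := map (f ∘ ray δ) atTop) (le_principal_iff.2 hδ)
  have hbI : b ∈ I := by
    by_contra h
    exact hf.notMem_range_of_mapClusterPt (hrange ▸ hIc.isOpen_compl)
      (tendsto_ray_atTop_cocompact δ) hb (hrange ▸ h)
  set Ψ : S → S := fun w => f (ray (max (-δ) 0) 0) * w * f (ray (-max δ 0) 0)
  have hΨ : Continuous Ψ := (continuous_mul_const _).comp (continuous_const_mul _)
  have hΨb : Ψ b ∈ V := hIV (hIdeal _ _ (hIdeal _ b hbI).1).2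
  refine (MapClusterPt.frequently hb (hΨ.continuousAt.preimage_mem_nhds (hV.mem_nhds hΨb))).mp ?_
  filter_upwards [eventually_ge_atTop 0] with u hu h
  simpa [Ψ, ← hhom, ray_mul_ray_mul_ray δ u hu] using h

lemma eventually_ray_zero_mem [Semigroup S] [T2Space S] [LocallyCompactSpace S]
    [SeparatelyContinuousMul S]
    (hIdeal : ∀ s : S, ∀ a ∈ I, s * a ∈ I ∧ a * s ∈ I)
    (hhom : ∀ u v : Bsg, f (u * v) = f u * f v) (hf : IsInducing f) (hrange : range f = Iᶜ)
    (hIc : IsClosed I) (hI : ¬IsOpen I) {K : Set S} (hK : IsCompact K) (hIK : I ⊆ interior K) :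
    ∀ᶠ t in atTop, f (ray 0 t) ∈ K := by
  obtain ⟨F, M, hFM⟩ := exists_preimage_frontier_subset_box hf hrange hK hIK
  have hout : ∀ {z}, M < height z → z ∉ box F M := fun hz h => (h.2.trans_lt hz).false
  obtain ⟨z, hzM, hzK⟩ := exists_lt_height_mem hIdeal hhom hrange hI M isOpen_interior hIK
  have hray : ∀ᶠ u in atTop, f (ray (index z) u) ∈ K :=
    (eventually_ge_atTop (height z)).mono fun u hu =>
      (ray_mem_iff_of_preimage_frontier_subset hf.continuous hFM (hout hzM) hu).2
        (interior_subset hzK)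
  obtain ⟨u, hu, hMu⟩ := ((frequently_ray_zero_mem_of_eventually_ray_mem hIdeal hhom hf hrange
    hIc hK hray isOpen_interior hIK).and_eventually (eventually_gt_atTop (max M 0))).exists
  have hu0 : 0 ≤ u := (le_max_right M 0).trans hMu.le
  have hw : M < height (ray 0 u) := by
    rw [height_ray, max_eq_left hu0]
    exact (le_max_left M 0).trans_lt hMu
  filter_upwards [eventually_ge_atTop u] with t ht
  have := (ray_mem_iff_of_preimage_frontier_subset hf.continuous hFM (hout hw) (u := t)
    (by rwa [height_ray, max_eq_left hu0])).2 (interior_subset hu)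
  rwa [index_ray] at this

lemma eventually_ray_mem [Semigroup S] [T2Space S] [LocallyCompactSpace S]
    [SeparatelyContinuousMul S] (hIdeal : ∀ s : S, ∀ a ∈ I, s * a ∈ I ∧ a * s ∈ I)
    (hhom : ∀ u v : Bsg, f (u * v) = f u * f v) (hf : IsInducing f) (hrange : range f = Iᶜ)
    (hIcomp : IsCompact I) (hI : ¬IsOpen I) (δ : ℝ) {V : Set S} (hV : IsOpen V)
    (hIV : I ⊆ V) :
    ∀ᶠ u in atTop, f (ray δ u) ∈ V := by
  obtain ⟨K, hK, hIK, hKV⟩ := exists_compact_between hIcomp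
    (hV.preimage (continuous_const_mul (f (ray δ 0)))) fun a ha => hIV (hIdeal _ a ha).1
  have h0 := eventually_ray_zero_mem hIdeal hhom hf hrange hIcomp.isClosed hI hK hIK
  filter_upwards [(tendsto_atTop_add_const_right atTop (max δ 0) tendsto_id).eventually h0,
    eventually_ge_atTop 0] with u hu hu0
  rw [← ray_zero_mul_ray_zero δ u hu0, hhom]
  exact hKV hu

end

theorem stmt9_general {S : Type*} [TopologicalSpace S] [T2Space S] [LocallyCompactSpace S] [Semigroup S]
    (hsep : ∀ a : S, Continuous (fun x : S => a * x) ∧ Continuous (fun x : S => x * a))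
    (I : Set S) (hIcomp : IsCompact I)
    (hIdeal : ∀ s : S, ∀ a ∈ I, s * a ∈ I ∧ a * s ∈ I)
    (f : Bsg → S)
    (hhom : ∀ u v : Bsg, f (u * v) = f u * f v)
    (hrange : Set.range f = Iᶜ)
    (hemb : Topology.IsEmbedding f) :
    IsOpen I ∨ CompactSpace S := by
  by_cases hI : IsOpen I
  · exact Or.inl hI
  have : SeparatelyContinuousMul S := ⟨(hsep _).1, (hsep _).2⟩
  obtain ⟨K, hK, hIK, -⟩ := exists_compact_between hIcomp isOpen_univ (subset_univ I)
  obtain ⟨F, M, hFM⟩ := exists_preimage_frontier_subset_box hemb.isInducing hrange hK hIK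
  refine Or.inr ⟨(hK.union ((isCompact_box F M).image hemb.continuous)).of_isClosed_subset
    isClosed_univ fun w _ => ?_⟩
  by_cases hw : w ∈ K
  · exact Or.inl hw
  obtain ⟨z, rfl⟩ : w ∈ range f := hrange ▸ fun hwI => hw (interior_subset (hIK hwI))
  refine Or.inr ⟨z, by_contra fun hz => hw ?_, rfl⟩
  obtain ⟨u, huK, hu⟩ := ((eventually_ray_mem hIdeal hhom hemb.isInducing hrange hIcomp hI
    (index z) isOpen_interior hIK).and (eventually_ge_atTop (height z))).exists
  exact (ray_mem_iff_of_preimage_frontier_subset hemb.continuous hFM hz hu).1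
    (interior_subset huK)

/-- either `I` is open in `S` or `S` is compact. -/
theorem stmt9 {S : Type*} [TopologicalSpace S] [T2Space S] [LocallyCompactSpace S] [Semigroup S]
    (hsep : ∀ a : S, Continuous (fun x : S => a * x) ∧ Continuous (fun x : S => x * a))
    (I : Set S) (hne : I.Nonempty) (hIcomp : IsCompact I)
    (hIdeal : ∀ s : S, ∀ a ∈ I, s * a ∈ I ∧ a * s ∈ I)
    (f : Bsg → S) (hinj : Function.Injective f)
    (hhom : ∀ u v : Bsg, f (u * v) = f u * f v)
    (hrange : Set.range f = Iᶜ)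
    (hemb : Topology.IsEmbedding f) :
    IsOpen I ∨ CompactSpace S :=
  stmt9_general hsep I hIcomp hIdeal f hhom hrange hemb
end

section
/- For arbitrary elements (a,b) and (c,d) of B_{[0,∞)} the following statements are equivalent: (i) (a,b) ≼ (c,d) with respect to the natural partial order; (ii) a ≥ c and a + d = b + c; (iii) b ≥ d and a + d = b + c. -/
/-!
An idempotent `e` satisfies `e₁ + e₁ - min e₂ e₁ = e₁` and `e₂ + e₂ - min e₂ e₁ = e₂`, which forces
`e = (x, x)`. Right multiplication by `(x, x)` sends `(c, d)` to `(c + x - m, d + x - m)` with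
`m = min d x ≤ x`: it shifts both coordinates by the same non-negative amount. Conversely `(a, b)`
with `a ≥ c` and `a - b = c - d` is `(c, d) · (b, b)`.
-/

namespace Bsg

@[simp]
lemma mul_fst (u v : Bsg) : (u * v).1.1 = u.1.1 + v.1.1 - min u.1.2 v.1.1 := rfl

@[simp]
lemma mul_snd (u v : Bsg) : (u * v).1.2 = u.1.2 + v.1.2 - min u.1.2 v.1.1 := rfl

lemma isIdempotentElem_iff (e : Bsg) : IsIdempotentElem e ↔ e.1.1 = e.1.2 := by
  constructor
  · intro he
    have h₁ : e.1.1 + e.1.1 - min e.1.2 e.1.1 = e.1.1 := congrArg (·.1.1) he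
    have h₂ : e.1.2 + e.1.2 - min e.1.2 e.1.1 = e.1.2 := congrArg (·.1.2) he
    rcases min_cases e.1.2 e.1.1 with ⟨h, _⟩ | ⟨h, _⟩ <;> rw [h] at h₁ h₂ <;> linarith
  · intro he
    ext <;> simp [he]

lemma ple_iff_fst (u v : Bsg) :
    ple u v ↔ v.1.1 ≤ u.1.1 ∧ u.1.1 + v.1.2 = u.1.2 + v.1.1 := by
  constructor
  · rintro ⟨e, he, rfl⟩
    have hdiag : e.1.1 = e.1.2 := (isIdempotentElem_iff e).1 he
    have hmin := min_le_right v.1.2 e.1.1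
    simp only [mul_fst, mul_snd]
    constructor <;> linarith
  · rintro ⟨hle, hsum⟩
    have hsnd : v.1.2 ≤ u.1.2 := by linarith
    refine ⟨⟨(u.1.2, u.1.2), u.2.2, u.2.2⟩, (isIdempotentElem_iff _).2 rfl, ?_⟩
    ext <;> simp only [mul_fst, mul_snd, min_eq_left hsnd] <;> linarith

end Bsg

open Bsg in
/-- description of the natural partial order on `B_{[0,∞)}`:
`(a,b) ≼ (c,d)` iff `a ≥ c` and `a + d = b + c`, iff `b ≥ d` and `a + d = b + c`. -/
theorem stmt10 (u v : Bsg) :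
    (ple u v ↔ (v.1.1 ≤ u.1.1 ∧ u.1.1 + v.1.2 = u.1.2 + v.1.1)) ∧
    (ple u v ↔ (v.1.2 ≤ u.1.2 ∧ u.1.1 + v.1.2 = u.1.2 + v.1.1)) := by
  refine ⟨ple_iff_fst u v, (ple_iff_fst u v).trans ?_⟩
  exact and_congr_left fun hsum => by constructor <;> intro <;> linarith
end
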